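/- arXiv:1103.3791 — 6 statements merged into one kernel-verified Lean document; each statement's English description precedes it below -/
import Mathlib

section
/- Let F : ℝ → ℝ be Lipschitz with constant K on [x₁, x₂]. Define ψ(x) = max(F(x₁) - K|x - x₁|, F(x₂) - K|x - x₂|). Then the minimum of ψ over [x₁, x₂] equals R = (F(x₁) + F(x₂) - K(x₂ - x₁))/2, attained at y = (x₁ + x₂)/2 - (F(x₂) - F(x₁))/(2K). -/
theorem stmt_3 (F : ℝ → ℝ) (K x₁ x₂ : ℝ) (hK : 0 < K) (hx : x₁ < x₂)
    (hlip : ∀ x' ∈ Set.Icc x₁ x₂, ∀ x'' ∈ Set.Icc x₁ x₂,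
      |F x' - F x''| ≤ K * |x' - x''|)
    (ψ : ℝ → ℝ) (hψ : ∀ x, ψ x = max (F x₁ - K * |x - x₁|) (F x₂ - K * |x - x₂|))
    (R y : ℝ) (hR : R = (F x₁ + F x₂ - K * (x₂ - x₁)) / 2)
    (hy : y = (x₁ + x₂) / 2 - (F x₂ - F x₁) / (2 * K)) :
    y ∈ Set.Icc x₁ x₂ ∧ ψ y = R ∧ ∀ x ∈ Set.Icc x₁ x₂, R ≤ ψ x := by
  have hK0 : K ≠ 0 := ne_of_gt hK
  have hK2 : (0:ℝ) < 2 * K := by linarith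
  have hd : |F x₂ - F x₁| ≤ K * (x₂ - x₁) := by
    have := hlip x₂ ⟨le_of_lt hx, le_refl _⟩ x₁ ⟨le_refl _, le_of_lt hx⟩
    rwa [abs_of_nonneg (by linarith : (0:ℝ) ≤ x₂ - x₁)] at this
  rw [abs_le] at hd
  have ht1 : (F x₂ - F x₁) / (2 * K) ≤ (x₂ - x₁) / 2 := by
    rw [div_le_iff₀ hK2]; nlinarith [hd.2]
  have ht2 : -((x₂ - x₁) / 2) ≤ (F x₂ - F x₁) / (2 * K) := by
    rw [le_div_iff₀ hK2]; nlinarith [hd.1]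
  have h1 : x₁ ≤ y := by rw [hy]; linarith
  have h2 : y ≤ x₂ := by rw [hy]; linarith
  refine ⟨⟨h1, h2⟩, ?_, ?_⟩
  · rw [hψ, abs_of_nonneg (by linarith : (0:ℝ) ≤ y - x₁),
      abs_of_nonpos (by linarith : y - x₂ ≤ 0)]
    have e1 : F x₁ - K * (y - x₁) = R := by rw [hy, hR]; field_simp; ring
    have e2 : F x₂ - K * (-(y - x₂)) = R := by rw [hy, hR]; field_simp; ring
    rw [e1, e2, max_self]
  · intro x hx'
    rw [hψ, abs_of_nonneg (by linarith [hx'.1] : (0:ℝ) ≤ x - x₁),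
      abs_of_nonpos (by linarith [hx'.2] : x - x₂ ≤ 0)]
    have hs : (F x₁ - K * (x - x₁)) + (F x₂ - K * (-(x - x₂))) = 2 * R := by
      rw [hR]; ring
    have m1 := le_max_left (F x₁ - K * (x - x₁)) (F x₂ - K * (-(x - x₂)))
    have m2 := le_max_right (F x₁ - K * (x - x₁)) (F x₂ - K * (-(x - x₂)))
    linarith
end

section
/- Let F : ℝ → ℝ be Lipschitz with constant L on [x₁, x₂], and suppose L < K. Then the Pijavskii minimizer y = (x₁ + x₂)/2 - (F(x₂) - F(x₁))/(2K) lies in the open interval (x₁, x₂), and max(x₂ - y, y - x₁) ≤ (1 + L/K)(x₂ - x₁)/2 < x₂ - x₁. -/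
theorem stmt_4 (F : ℝ → ℝ) (L K x₁ x₂ : ℝ) (hL : 0 < L) (hLK : L < K) (hx : x₁ < x₂)
    (hlip : ∀ x' ∈ Set.Icc x₁ x₂, ∀ x'' ∈ Set.Icc x₁ x₂,
      |F x' - F x''| ≤ L * |x' - x''|)
    (y : ℝ) (hy : y = (x₁ + x₂) / 2 - (F x₂ - F x₁) / (2 * K)) :
    y ∈ Set.Ioo x₁ x₂ ∧
      max (x₂ - y) (y - x₁) ≤ (1 + L / K) * (x₂ - x₁) / 2 ∧
      (1 + L / K) * (x₂ - x₁) / 2 < x₂ - x₁ := by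
  have hK : 0 < K := hL.trans hLK
  have hF : |F x₂ - F x₁| ≤ L * (x₂ - x₁) := by
    have h := hlip x₂ ⟨hx.le, le_refl _⟩ x₁ ⟨le_refl _, hx.le⟩
    rwa [abs_of_pos (show (0:ℝ) < x₂ - x₁ by linarith)] at h
  have habs := abs_le.mp hF
  have hD : (F x₂ - F x₁) / (2 * K) * (2 * K) = F x₂ - F x₁ :=
    div_mul_cancel₀ _ (by positivity)
  have hLKe : L / K * K = L := div_mul_cancel₀ _ hK.ne'
  constructor
  · constructor
    · rw [hy]; nlinarith [habs.1, habs.2]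
    · rw [hy]; nlinarith [habs.1, habs.2]
  constructor
  · apply max_le
    · rw [hy]; nlinarith [habs.1, habs.2]
    · rw [hy]; nlinarith [habs.1, habs.2]
  · nlinarith
end

section
/- Let f : ℝ → ℝ be Lipschitz with constant L on [x₁, x₂] with L < K, and let x* ∈ [x₁, x₂] with f(x*) ≤ Z. Set z₁ = f(x₁) - Z and z₂ = f(x₂) - Z, and assume z₁ ≥ 0 and z₂ ≥ 0. Then the characteristic R = (z₁ + z₂ - K(x₂ - x₁))/2 satisfies R ≤ (L - K)(x₂ - x₁)/2 < 0. -/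
theorem stmt_9 (f : ℝ → ℝ) (L K x₁ x₂ Z : ℝ) (hL : 0 < L) (hLK : L < K) (hx : x₁ < x₂)
    (hlip : ∀ x' ∈ Set.Icc x₁ x₂, ∀ x'' ∈ Set.Icc x₁ x₂,
      |f x' - f x''| ≤ L * |x' - x''|)
    (xs : ℝ) (hxs : xs ∈ Set.Icc x₁ x₂) (hfxs : f xs ≤ Z)
    (hz₁ : 0 ≤ f x₁ - Z) (hz₂ : 0 ≤ f x₂ - Z) :
    ((f x₁ - Z) + (f x₂ - Z) - K * (x₂ - x₁)) / 2 ≤ (L - K) * (x₂ - x₁) / 2 ∧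
      (L - K) * (x₂ - x₁) / 2 < 0 := by
  obtain ⟨h1, h2⟩ := hxs
  have e1 : Set.Icc x₁ x₂ := ⟨x₁, le_refl _, le_of_lt hx⟩
  have h₁ := hlip x₁ ⟨le_refl _, le_of_lt hx⟩ xs ⟨h1, h2⟩
  have h₂ := hlip x₂ ⟨le_of_lt hx, le_refl _⟩ xs ⟨h1, h2⟩
  rw [abs_of_nonneg (by linarith), abs_of_nonpos (by linarith)] at h₁
  rw [abs_of_nonneg (by linarith), abs_of_nonneg (by linarith)] at h₂
  constructor
  · nlinarith
  · nlinarith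
end

section
/- Under the index scheme, a point x* minimizes the discontinuous function φ over [a,b] (with value 0) if and only if x* is a global minimizer of the constrained problem min{g_{m+1}(x) : x ∈ Q_{m+1}}, provided Q_{m+1} is nonempty and compact and g_{m+1} is continuous. -/
open scoped Classical

theorem stmt_14 (a b : ℝ) (hab : a < b) (m : ℕ) (g : ℕ → ℝ → ℝ)
    (hg : ∀ j, 1 ≤ j → j ≤ m + 1 → Continuous (g j))
    (Q : ℕ → Set ℝ) (hQ1 : Q 1 = Set.Icc a b)
    (hQs : ∀ j, 1 ≤ j → j ≤ m → Q (j + 1) = {x ∈ Q j | g j x ≤ 0})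
    (hQne : (Q (m + 1)).Nonempty) (hQcpt : IsCompact (Q (m + 1)))
    (ν : ℝ → ℕ)
    (hν : ∀ x ∈ Set.Icc a b,
      ν x = if h : ∃ j, 1 ≤ j ∧ j ≤ m ∧ 0 < g j x
            then Nat.find h else m + 1)
    (gstar : ℝ) (hgstar : IsLeast (g (m + 1) '' Q (m + 1)) gstar)
    (φ : ℝ → ℝ)
    (hφ : ∀ x ∈ Set.Icc a b,
      φ x = if ν x < m + 1 then g (ν x) x else g (m + 1) x - gstar)
    (xs : ℝ) (hxs : xs ∈ Set.Icc a b) :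
    (φ xs = 0 ∧ ∀ x ∈ Set.Icc a b, φ xs ≤ φ x) ↔
      (xs ∈ Q (m + 1) ∧ ∀ x ∈ Q (m + 1), g (m + 1) xs ≤ g (m + 1) x) := by
  -- Characterization of Q (k+1)
  have key : ∀ k, k ≤ m →
      Q (k + 1) = {x | x ∈ Set.Icc a b ∧ ∀ j, 1 ≤ j → j ≤ k → g j x ≤ 0} := by
    intro k
    induction k with
    | zero =>
      intro _
      rw [hQ1]; ext x
      simp only [Set.mem_setOf_eq, iff_self_and]
      intro _ j h1 h0; omega
    | succ k ih =>
      intro hk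
      rw [hQs (k + 1) (by omega) hk, ih (by omega)]
      ext x
      simp only [Set.mem_setOf_eq]
      constructor
      · rintro ⟨⟨hx, hall⟩, hgk⟩
        refine ⟨hx, fun j h1 h2 => ?_⟩
        rcases Nat.lt_or_ge j (k + 1) with h | h
        · exact hall j h1 (by omega)
        · have : j = k + 1 := by omega
          simpa [this] using hgk
      · rintro ⟨hx, hall⟩
        exact ⟨⟨hx, fun j h1 h2 => hall j h1 (by omega)⟩,
          hall (k + 1) (by omega) le_rfl⟩
  have hQsub := key m le_rfl
  have hmem : ∀ x, x ∈ Q (m + 1) ↔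
      x ∈ Set.Icc a b ∧ ∀ j, 1 ≤ j → j ≤ m → g j x ≤ 0 := by
    intro x; rw [hQsub]; rfl
  -- values of φ
  have hphi : ∀ x ∈ Set.Icc a b,
      (x ∈ Q (m + 1) → φ x = g (m + 1) x - gstar) ∧ (x ∉ Q (m + 1) → 0 < φ x) := by
    intro x hx
    by_cases h : ∃ j, 1 ≤ j ∧ j ≤ m ∧ 0 < g j x
    · have hνx : ν x = Nat.find h := by rw [hν x hx]; simp [h]
      obtain ⟨h1, h2, h3⟩ := Nat.find_spec h
      have hnot : x ∉ Q (m + 1) := by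
        rw [hmem]; rintro ⟨_, hall⟩
        exact absurd (hall _ h1 h2) (not_le.mpr h3)
      refine ⟨fun hx' => absurd hx' hnot, fun _ => ?_⟩
      rw [hφ x hx, hνx, if_pos (by omega)]
      exact h3
    · have hνx : ν x = m + 1 := by rw [hν x hx]; simp [h]
      push_neg at h
      have hx' : x ∈ Q (m + 1) := (hmem x).mpr ⟨hx, fun j h1 h2 => h j h1 h2⟩
      have hval : φ x = g (m + 1) x - gstar := by
        rw [hφ x hx, hνx, if_neg (lt_irrefl _)]
      exact ⟨fun _ => hval, fun hc => absurd hx' hc⟩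
  have hQIcc : ∀ x ∈ Q (m + 1), x ∈ Set.Icc a b := fun x hx => ((hmem x).mp hx).1
  constructor
  · rintro ⟨h0, hminφ⟩
    have hxsQ : xs ∈ Q (m + 1) := by
      by_contra hc
      have := (hphi xs hxs).2 hc; linarith
    have hval : g (m + 1) xs - gstar = 0 := by
      rw [← (hphi xs hxs).1 hxsQ]; exact h0
    refine ⟨hxsQ, fun x hx => ?_⟩
    have : gstar ≤ g (m + 1) x := hgstar.2 ⟨x, hx, rfl⟩
    linarith
  · rintro ⟨hxsQ, hmin⟩
    obtain ⟨y, hy, hgy⟩ := hgstar.1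
    have h1 : g (m + 1) xs ≤ gstar := hgy ▸ hmin y hy
    have h2 : gstar ≤ g (m + 1) xs := hgstar.2 ⟨xs, hxsQ, rfl⟩
    have h0 : φ xs = 0 := by
      rw [(hphi xs hxs).1 hxsQ]; linarith
    refine ⟨h0, fun x hx => ?_⟩
    rw [h0]
    by_cases hc : x ∈ Q (m + 1)
    · rw [(hphi x hx).1 hc]
      have : gstar ≤ g (m + 1) x := hgstar.2 ⟨x, hc, rfl⟩
      linarith
    · exact le_of_lt ((hphi x hx).2 hc)
end

section
/- Let F : ℝ → ℝ be Lipschitz with constant L on [a,b] with 0 < L, and let x₀, ..., x_k be points with a = x₀ < x₁ < ... < x_k = b. Define, for K ≥ L, R_i = (F(x_{i-1}) + F(x_i) - K(x_i - x_{i-1}))/2 for 1 ≤ i ≤ k. Then min{F(x) : x ∈ [a,b]} ≥ min{R_i : 1 ≤ i ≤ k}. -/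
theorem stmt_18 (F : ℝ → ℝ) (L K a b : ℝ) (hL : 0 < L) (hK : L ≤ K) (hab : a < b)
    (hlip : ∀ x' ∈ Set.Icc a b, ∀ x'' ∈ Set.Icc a b,
      |F x' - F x''| ≤ L * |x' - x''|)
    (k : ℕ) (hk : 1 ≤ k) (x : ℕ → ℝ) (hxa : x 0 = a) (hxb : x k = b)
    (hmono : ∀ i < k, x i < x (i + 1)) :
    ∀ y ∈ Set.Icc a b, ∃ i, 1 ≤ i ∧ i ≤ k ∧
      (F (x (i - 1)) + F (x i) - K * (x i - x (i - 1))) / 2 ≤ F y := by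
  classical
  intro y hy
  obtain ⟨hay, hyb⟩ := hy
  -- monotonicity of x up to k
  have hmono' : ∀ i j : ℕ, i ≤ j → j ≤ k → x i ≤ x j := by
    intro i j hij hjk
    induction j with
    | zero => simp_all
    | succ n ih =>
      rcases Nat.lt_or_ge i (n+1) with h | h
      · have h1 : x i ≤ x n := ih (Nat.lt_succ_iff.mp h) (le_trans (Nat.le_succ n) hjk)
        exact le_trans h1 (le_of_lt (hmono n (Nat.lt_of_succ_le hjk)))
      · have : i = n + 1 := le_antisymm hij h
        simp [this]
  have hmem : ∀ i ≤ k, x i ∈ Set.Icc a b := by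
    intro i hi
    constructor
    · rw [← hxa]; exact hmono' 0 i (Nat.zero_le _) hi
    · rw [← hxb]; exact hmono' i k hi le_rfl
  -- find the right interval
  set P : ℕ → Prop := fun i => x i ≤ y with hP
  have hP0 : P 0 := by simp [hP, hxa, hay]
  set m := Nat.findGreatest P k with hm
  have hPm : P m := Nat.findGreatest_spec (Nat.zero_le k) hP0
  have hmk : m ≤ k := Nat.findGreatest_le k
  rcases eq_or_lt_of_le hmk with heq | hlt
  · -- m = k : then y = x k, use i = k
    refine ⟨k, hk, le_rfl, ?_⟩
    have hyxk : y = x k := le_antisymm (hxb ▸ hyb) (heq ▸ hPm)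
    have h1 := hlip (x (k-1)) (hmem (k-1) (Nat.sub_le k 1)) y ⟨hay, hyb⟩
    have hL1 : L * |x (k-1) - y| ≤ K * |x (k-1) - y| := by
      apply mul_le_mul_of_nonneg_right hK (abs_nonneg _)
    have hxle : x (k-1) ≤ x k := hmono' (k-1) k (Nat.sub_le k 1) le_rfl
    have habs : |x (k-1) - y| = y - x (k-1) := by
      rw [abs_sub_comm]; exact abs_of_nonneg (by rw [hyxk]; linarith)
    have h2 : |F (x (k-1)) - F y| ≤ K * (y - x (k-1)) := by
      rw [← habs]; exact le_trans h1 hL1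
    have h3 := abs_le.mp h2
    rw [← hyxk]
    linarith [h3.1, h3.2]
  · -- m < k : y < x (m+1), use i = m+1
    have hnot : ¬ P (m+1) := Nat.findGreatest_is_greatest (Nat.lt_succ_self m) hlt
    have hylt : y < x (m+1) := lt_of_not_ge hnot
    refine ⟨m+1, Nat.le_add_left 1 m, hlt, ?_⟩
    simp only [Nat.add_sub_cancel]
    have hmem1 := hmem m (le_of_lt hlt)
    have hmem2 := hmem (m+1) hlt
    have h1 := hlip (x m) hmem1 y ⟨hay, hyb⟩
    have h2 := hlip (x (m+1)) hmem2 y ⟨hay, hyb⟩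
    have habs1 : |x m - y| = y - x m := by
      rw [abs_sub_comm]; exact abs_of_nonneg (by linarith [hPm])
    have habs2 : |x (m+1) - y| = x (m+1) - y := abs_of_nonneg (by linarith)
    have h1' : |F (x m) - F y| ≤ K * (y - x m) := by
      rw [← habs1]
      exact le_trans h1 (mul_le_mul_of_nonneg_right hK (abs_nonneg _))
    have h2' : |F (x (m+1)) - F y| ≤ K * (x (m+1) - y) := by
      rw [← habs2]
      exact le_trans h2 (mul_le_mul_of_nonneg_right hK (abs_nonneg _))
    have ha1 := abs_le.mp h1'
    have ha2 := abs_le.mp h2'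
    nlinarith [ha1.1, ha1.2, ha2.1, ha2.2]
end

section
/- Let F : ℝ → ℝ be Lipschitz with constant L on [a,b], 0 < L ≤ K, and let a = x₀ < ... < x_k = b with R_t = min over i of R_i, where R_i = (F(x_{i-1}) + F(x_i) - K(x_i - x_{i-1}))/2. Set Z*_k = min{F(x_i) : 0 ≤ i ≤ k}. Then the global minimum F* = min{F(x) : x ∈ [a,b]} satisfies R_t ≤ F* ≤ Z*_k. -/
theorem stmt_19 (F : ℝ → ℝ) (L K a b : ℝ) (hL : 0 < L) (hK : L ≤ K) (hKpos : 0 < K)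
    (hab : a < b)
    (hlip : ∀ x' ∈ Set.Icc a b, ∀ x'' ∈ Set.Icc a b,
      |F x' - F x''| ≤ L * |x' - x''|)
    (k : ℕ) (hk : 1 ≤ k) (x : ℕ → ℝ) (hxa : x 0 = a) (hxb : x k = b)
    (hmono : ∀ i < k, x i < x (i + 1))
    (R : ℕ → ℝ)
    (hR : ∀ i, 1 ≤ i → i ≤ k →
      R i = (F (x (i - 1)) + F (x i) - K * (x i - x (i - 1))) / 2)
    (t : ℕ) (ht1 : 1 ≤ t) (htk : t ≤ k)
    (htmin : ∀ i, 1 ≤ i → i ≤ k → R t ≤ R i)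
    (Zstar : ℝ) (hZ : IsLeast {z | ∃ i ≤ k, z = F (x i)} Zstar) :
    R t ≤ sInf (F '' Set.Icc a b) ∧ sInf (F '' Set.Icc a b) ≤ Zstar := by
  classical
  have hmono' : ∀ m n, m ≤ n → n ≤ k → x m ≤ x n := by
    intro m n hmn hnk
    induction n with
    | zero => rw [Nat.le_zero.mp hmn]
    | succ n ih =>
      rcases Nat.eq_or_lt_of_le hmn with h | h
      · rw [h]
      · exact (ih (Nat.lt_succ_iff.mp h) (le_trans (Nat.le_succ n) hnk)).trans
          (hmono n (by omega)).le
  have hxmem : ∀ i, i ≤ k → x i ∈ Set.Icc a b := fun i hi =>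
    ⟨hxa ▸ hmono' 0 i (Nat.zero_le _) hi, hxb ▸ hmono' i k hi le_rfl⟩
  -- key : R t is a lower bound for F on [a,b]
  have key : ∀ y ∈ Set.Icc a b, R t ≤ F y := by
    intro y hy
    set P : ℕ → Prop := fun i => x i ≤ y with hP
    have hP0 : P 0 := by show x 0 ≤ y; rw [hxa]; exact hy.1
    set j := Nat.findGreatest P k with hj
    have hjk : j ≤ k := Nat.findGreatest_le k
    have hxj : x j ≤ y := Nat.findGreatest_spec (Nat.zero_le k) hP0
    -- choose interval index i
    obtain ⟨i, hi1, hik, hpy, hyq⟩ :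
        ∃ i, 1 ≤ i ∧ i ≤ k ∧ x (i - 1) ≤ y ∧ y ≤ x i := by
      rcases eq_or_lt_of_le hjk with h | h
      · refine ⟨k, hk, le_rfl, ?_, ?_⟩
        · exact le_trans (hmono' (k-1) j (by omega) hjk) hxj
        · exact hxb ▸ hy.2
      · refine ⟨j + 1, by omega, by omega, ?_, ?_⟩
        · simpa using hxj
        · exact le_of_not_ge (Nat.findGreatest_is_greatest (j.lt_succ_self) (by omega))
    have hpm := hxmem (i - 1) (by omega)
    have hqm := hxmem i hik
    have hym : y ∈ Set.Icc a b := hy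
    have h1 : F (x i) - F y ≤ K * (x i - y) := by
      have h := hlip (x i) hqm y hym
      have h' : F (x i) - F y ≤ L * |x i - y| := le_trans (le_abs_self _) h
      rw [abs_of_nonneg (by linarith : (0:ℝ) ≤ x i - y)] at h'
      nlinarith
    have h2 : F (x (i - 1)) - F y ≤ K * (y - x (i - 1)) := by
      have h := hlip (x (i - 1)) hpm y hym
      have h' : F (x (i - 1)) - F y ≤ L * |x (i - 1) - y| :=
        le_trans (le_abs_self _) h
      rw [abs_of_nonpos (by linarith : x (i - 1) - y ≤ 0), neg_sub] at h'
      nlinarith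
    have := htmin i hi1 hik
    rw [hR i hi1 hik] at this
    linarith
  have hbdd : BddBelow (F '' Set.Icc a b) := by
    refine ⟨R t, ?_⟩
    rintro z ⟨y, hy, rfl⟩
    exact key y hy
  have hne : (F '' Set.Icc a b).Nonempty := ⟨F a, a, ⟨le_rfl, hab.le⟩, rfl⟩
  constructor
  · apply le_csInf hne
    rintro z ⟨y, hy, rfl⟩
    exact key y hy
  · obtain ⟨i, hi, rfl⟩ := hZ.1
    exact csInf_le hbdd ⟨x i, hxmem i hi, rfl⟩
end
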